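/- arXiv:1803.10689 — 2 statements merged into one kernel-verified Lean document; each statement's English description precedes it below -/
import Mathlib

section
/- Fix P symmetric positive definite, Q̂ symmetric, Â ∈ ℝⁿˣⁿ, B ∈ ℝⁿˣᵐ, f ∈ ℝⁿ, and α̃, β ∈ ℝ. Let x ∈ ℝⁿ with fᵀx = 1, and suppose 2BᵀPx + λfᵀB ≠ 0 (as vectors in ℝᵐ) for all λ > 0, Bᵀf ≠ 0, and 2BᵀPx ≠ 0. Then there exists v ∈ ℝᵐ satisfying simultaneously −fᵀBv ≥ fᵀ(Â + α̃I)x and 2xᵀPBv ≤ xᵀ(Q̂ − βP)x. -/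
open Matrix

private lemma dot_self_pos {m : ℕ} {a : Fin m → ℝ} (ha : a ≠ 0) : 0 < a ⬝ᵥ a := by
  have h1 : 0 ≤ a ⬝ᵥ a := by
    have := dotProduct_star_self_nonneg a
    simpa using this
  have h2 : a ⬝ᵥ a ≠ 0 := fun h => ha (dotProduct_self_eq_zero.mp h)
  exact lt_of_le_of_ne h1 (Ne.symm h2)

private lemma key_lemma {m : ℕ} (a b : Fin m → ℝ) (ha : a ≠ 0) (hb : b ≠ 0)
    (h : ∀ lam : ℝ, 0 < lam → b + lam • a ≠ 0) :
    ∃ w : Fin m → ℝ, a ⬝ᵥ w < 0 ∧ b ⬝ᵥ w < 0 := by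
  have haa : 0 < a ⬝ᵥ a := dot_self_pos ha
  set l : ℝ := (a ⬝ᵥ b) / (a ⬝ᵥ a) with hl
  set r : Fin m → ℝ := b - l • a with hr
  have har : a ⬝ᵥ r = 0 := by
    simp only [hr, dotProduct_sub, dotProduct_smul, smul_eq_mul, hl]
    field_simp
    ring
  by_cases hr0 : r = 0
  · -- b = l • a, with l > 0
    have hbla : b = l • a := by
      have := sub_eq_zero.mp hr0
      simpa [hr] using sub_eq_zero.mp hr0
    have hlpos : 0 < l := by
      rcases lt_trichotomy l 0 with hlt | heq | hgt
      · exfalso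
        apply h (-l) (by linarith)
        rw [hbla]; ext i; simp [neg_smul]
      · exfalso; apply hb; rw [hbla, heq, zero_smul]
      · exact hgt
    refine ⟨-a, ?_, ?_⟩
    · simpa using neg_lt_zero.mpr haa
    · rw [hbla, smul_dotProduct, smul_eq_mul]
      have : a ⬝ᵥ (-a) < 0 := by simpa using neg_lt_zero.mpr haa
      exact mul_neg_of_pos_of_neg hlpos this
  · -- r ≠ 0
    have hrr : 0 < r ⬝ᵥ r := dot_self_pos hr0
    refine ⟨(-(a ⬝ᵥ a)⁻¹) • a + ((l - 1) / (r ⬝ᵥ r)) • r, ?_, ?_⟩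
    · have : a ⬝ᵥ ((-(a ⬝ᵥ a)⁻¹) • a + ((l - 1) / (r ⬝ᵥ r)) • r) = -1 := by
        simp only [dotProduct_add, dotProduct_smul, smul_eq_mul, har, mul_zero, add_zero]
        field_simp
      rw [this]; norm_num
    · have hbrl : b = l • a + r := by simp [hr]
      have hra : r ⬝ᵥ a = 0 := by rw [dotProduct_comm]; exact har
      have : b ⬝ᵥ ((-(a ⬝ᵥ a)⁻¹) • a + ((l - 1) / (r ⬝ᵥ r)) • r) = -1 := by
        rw [hbrl]
        simp only [add_dotProduct, smul_dotProduct, dotProduct_add, dotProduct_smul,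
          smul_eq_mul, har, hra, mul_zero, add_zero, zero_add]
        field_simp
        ring
      rw [this]; norm_num

theorem stmt4 {n m : ℕ} (P Qhat Ahat : Matrix (Fin n) (Fin n) ℝ)
    (B : Matrix (Fin n) (Fin m) ℝ) (f : Fin n → ℝ) (αt β : ℝ)
    (hP : P.PosDef) (hQ : Qhat.IsSymm) (x : Fin n → ℝ) (hx : f ⬝ᵥ x = 1)
    (hBf : Bᵀ.mulVec f ≠ 0) (hBPx : (2 : ℝ) • Bᵀ.mulVec (P.mulVec x) ≠ 0)
    (hnotanti : ∀ lam : ℝ, 0 < lam →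
      (2 : ℝ) • Bᵀ.mulVec (P.mulVec x) + lam • Bᵀ.mulVec f ≠ 0) :
    ∃ v : Fin m → ℝ,
      f ⬝ᵥ ((Ahat + αt • (1 : Matrix (Fin n) (Fin n) ℝ)).mulVec x) ≤ -(f ⬝ᵥ B.mulVec v) ∧
      2 * (x ⬝ᵥ P.mulVec (B.mulVec v)) ≤ x ⬝ᵥ (Qhat - β • P).mulVec x := by
  set a : Fin m → ℝ := Bᵀ.mulVec f with hadef
  set b : Fin m → ℝ := (2 : ℝ) • Bᵀ.mulVec (P.mulVec x) with hbdef
  obtain ⟨w, haw, hbw⟩ := key_lemma a b hBf hBPx hnotanti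
  set c1 : ℝ := f ⬝ᵥ ((Ahat + αt • (1 : Matrix (Fin n) (Fin n) ℝ)).mulVec x) with hc1
  set c2 : ℝ := x ⬝ᵥ (Qhat - β • P).mulVec x with hc2
  set p : ℝ := -(a ⬝ᵥ w) with hp
  set q : ℝ := -(b ⬝ᵥ w) with hq
  have hppos : 0 < p := by simp [hp]; linarith
  have hqpos : 0 < q := by simp [hq]; linarith
  set t : ℝ := max (c1 / p) (-c2 / q) with ht
  refine ⟨t • w, ?_, ?_⟩
  · -- c1 ≤ -(f ⬝ᵥ B *ᵥ (t • w))
    have key : f ⬝ᵥ B.mulVec (t • w) = a ⬝ᵥ (t • w) := by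
      rw [hadef, Matrix.dotProduct_mulVec, Matrix.mulVec_transpose]
    have hdot : a ⬝ᵥ (t • w) = t * (a ⬝ᵥ w) := by
      rw [dotProduct_smul, smul_eq_mul]
    have htge : c1 / p ≤ t := le_max_left _ _
    have : c1 ≤ t * p := by
      rw [div_le_iff₀ hppos] at htge; linarith
    rw [key, hdot]
    have : t * (a ⬝ᵥ w) = -(t * p) := by rw [hp]; ring
    linarith [this ▸ le_refl (t * (a ⬝ᵥ w))]
  · -- 2 * (x ⬝ᵥ P *ᵥ (B *ᵥ (t • w))) ≤ c2
    have key : 2 * (x ⬝ᵥ P.mulVec (B.mulVec (t • w))) = b ⬝ᵥ (t • w) := by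
      rw [hbdef]
      have hPsymm : Pᵀ = P := by simpa using hP.1.eq
      have h1 : x ⬝ᵥ P.mulVec (B.mulVec (t • w)) = (Bᵀ.mulVec (P.mulVec x)) ⬝ᵥ (t • w) := by
        rw [Matrix.dotProduct_mulVec, Matrix.dotProduct_mulVec, ← Matrix.mulVec_transpose,
          ← Matrix.mulVec_transpose]
        congr 1
        rw [hPsymm]
      rw [h1, smul_dotProduct, smul_eq_mul]
    have htge : -c2 / q ≤ t := le_max_right _ _
    have h2 : -c2 ≤ t * q := by
      rw [div_le_iff₀ hqpos] at htge; linarith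
    rw [key, dotProduct_smul, smul_eq_mul]
    have : t * (b ⬝ᵥ w) = -(t * q) := by rw [hq]; ring
    linarith
end

section
/- Let R∧ be as above with φ > 0, and suppose (r₁, r₂) ≠ (0, 0). Then R∧ is differentiable at (r₁, r₂) and its partial derivatives satisfy ∂R∧/∂r₁ = ρ(φ)(φ − φ²r₁/√(φ²r₁² + r₂²)) ≥ 0 and ∂R∧/∂r₂ = ρ(φ)(1 − r₂/√(φ²r₁² + r₂²)) ≥ 0; in particular, both partial derivatives of R∧ at any (r₁, r₂) ≠ (0, 0) are nonnegative. -/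
theorem stmt18 (φ : ℝ) (hφ : 0 < φ) (r₁ r₂ : ℝ) (hne : (r₁, r₂) ≠ (0, 0)) :
    let ρ : ℝ := (φ + 1 - Real.sqrt (φ ^ 2 + 1))⁻¹
    let Rand : ℝ × ℝ → ℝ :=
      fun r => ρ * (φ * r.1 + r.2 - Real.sqrt (φ ^ 2 * r.1 ^ 2 + r.2 ^ 2))
    DifferentiableAt ℝ Rand (r₁, r₂) ∧
      fderiv ℝ Rand (r₁, r₂) (1, 0) =
        ρ * (φ - φ ^ 2 * r₁ / Real.sqrt (φ ^ 2 * r₁ ^ 2 + r₂ ^ 2)) ∧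
      0 ≤ ρ * (φ - φ ^ 2 * r₁ / Real.sqrt (φ ^ 2 * r₁ ^ 2 + r₂ ^ 2)) ∧
      fderiv ℝ Rand (r₁, r₂) (0, 1) =
        ρ * (1 - r₂ / Real.sqrt (φ ^ 2 * r₁ ^ 2 + r₂ ^ 2)) ∧
      0 ≤ ρ * (1 - r₂ / Real.sqrt (φ ^ 2 * r₁ ^ 2 + r₂ ^ 2)) := by
  intro ρ Rand
  set s : ℝ := φ ^ 2 * r₁ ^ 2 + r₂ ^ 2 with hsdef
  have hs : 0 < s := by
    have h : r₁ ≠ 0 ∨ r₂ ≠ 0 := by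
      by_contra h; push_neg at h; exact hne (by simp [h.1, h.2])
    rcases h with h | h <;> positivity
  have hsq : 0 < Real.sqrt s := Real.sqrt_pos.mpr hs
  -- derivative of the inner quadratic
  have hq : HasFDerivAt (fun r : ℝ × ℝ => φ ^ 2 * r.1 ^ 2 + r.2 ^ 2)
      ((φ ^ 2 * (2 * r₁)) • (ContinuousLinearMap.fst ℝ ℝ ℝ) +
        (2 * r₂) • (ContinuousLinearMap.snd ℝ ℝ ℝ)) (r₁, r₂) := by
    have h1 : HasFDerivAt (fun r : ℝ × ℝ => φ ^ 2 * r.1 ^ 2)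
        ((φ ^ 2 * (2 * r₁)) • (ContinuousLinearMap.fst ℝ ℝ ℝ)) (r₁, r₂) := by
      have heq : (fun r : ℝ × ℝ => φ ^ 2 * r.1 ^ 2) = fun r : ℝ × ℝ => φ ^ 2 * (r.1 * r.1) := by
        funext r; ring
      rw [heq]
      have := ((hasFDerivAt_fst (𝕜 := ℝ) (p := ((r₁, r₂) : ℝ × ℝ))).mul
        (hasFDerivAt_fst (𝕜 := ℝ) (p := ((r₁, r₂) : ℝ × ℝ)))).const_mul (φ ^ 2)
      refine this.congr_fderiv ?_
      ext v <;> simp <;> ring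
    have h2 : HasFDerivAt (fun r : ℝ × ℝ => r.2 ^ 2)
        ((2 * r₂) • (ContinuousLinearMap.snd ℝ ℝ ℝ)) (r₁, r₂) := by
      have heq : (fun r : ℝ × ℝ => r.2 ^ 2) = fun r : ℝ × ℝ => r.2 * r.2 := by
        funext r; ring
      rw [heq]
      have := (hasFDerivAt_snd (𝕜 := ℝ) (p := ((r₁, r₂) : ℝ × ℝ))).mul
        (hasFDerivAt_snd (𝕜 := ℝ) (p := ((r₁, r₂) : ℝ × ℝ)))
      refine this.congr_fderiv ?_
      ext v <;> simp <;> ring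
    exact h1.add h2
  have hsqrt : HasDerivAt Real.sqrt (1 / (2 * Real.sqrt s)) s :=
    Real.hasDerivAt_sqrt hs.ne'
  have hg : HasFDerivAt (fun r : ℝ × ℝ => Real.sqrt (φ ^ 2 * r.1 ^ 2 + r.2 ^ 2))
      ((1 / (2 * Real.sqrt s)) • ((φ ^ 2 * (2 * r₁)) • (ContinuousLinearMap.fst ℝ ℝ ℝ) +
        (2 * r₂) • (ContinuousLinearMap.snd ℝ ℝ ℝ))) (r₁, r₂) :=
    HasDerivAt.comp_hasFDerivAt (r₁, r₂) hsqrt hq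
  have hlin : HasFDerivAt (fun r : ℝ × ℝ => φ * r.1 + r.2)
      (φ • (ContinuousLinearMap.fst ℝ ℝ ℝ) + (ContinuousLinearMap.snd ℝ ℝ ℝ)) (r₁, r₂) := by
    have h1 := (hasFDerivAt_fst (𝕜 := ℝ) (p := ((r₁, r₂) : ℝ × ℝ))).const_mul φ
    exact h1.add (hasFDerivAt_snd)
  have hR : HasFDerivAt Rand
      (ρ • ((φ • (ContinuousLinearMap.fst ℝ ℝ ℝ) + (ContinuousLinearMap.snd ℝ ℝ ℝ)) -
        ((1 / (2 * Real.sqrt s)) • ((φ ^ 2 * (2 * r₁)) • (ContinuousLinearMap.fst ℝ ℝ ℝ) +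
          (2 * r₂) • (ContinuousLinearMap.snd ℝ ℝ ℝ))))) (r₁, r₂) := by
    exact (hlin.sub hg).const_mul ρ
  have hF := hR.fderiv
  -- nonnegativity of ρ
  have hρpos : 0 < φ + 1 - Real.sqrt (φ ^ 2 + 1) := by
    have h1 : Real.sqrt (φ ^ 2 + 1) < φ + 1 := by
      rw [show φ + 1 = Real.sqrt ((φ + 1) ^ 2) by rw [Real.sqrt_sq (by linarith)]]
      apply Real.sqrt_lt_sqrt (by positivity)
      nlinarith
    linarith
  have hρ : 0 ≤ ρ := le_of_lt (inv_pos.mpr hρpos)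
  -- key inequalities
  have key1 : φ ^ 2 * r₁ / Real.sqrt s ≤ φ := by
    rw [div_le_iff₀ hsq]
    have h1 : φ * r₁ ≤ Real.sqrt s := by
      calc φ * r₁ ≤ |φ * r₁| := le_abs_self _
        _ = Real.sqrt ((φ * r₁) ^ 2) := (Real.sqrt_sq_eq_abs _).symm
        _ ≤ Real.sqrt s := Real.sqrt_le_sqrt (by nlinarith)
    nlinarith
  have key2 : r₂ / Real.sqrt s ≤ 1 := by
    rw [div_le_one hsq]
    calc r₂ ≤ |r₂| := le_abs_self _
      _ = Real.sqrt (r₂ ^ 2) := (Real.sqrt_sq_eq_abs _).symm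
      _ ≤ Real.sqrt s := Real.sqrt_le_sqrt (by nlinarith)
  refine ⟨hR.differentiableAt, ?_, ?_, ?_, ?_⟩
  · rw [hF]; simp
    left; field_simp
  · exact mul_nonneg hρ (by linarith)
  · rw [hF]; simp
    left; field_simp
  · exact mul_nonneg hρ (by linarith)
end
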